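/- Let G be a finite connected simple graph, μ a positive weight function, and v a vertex of degree d_v ≥ 3 with neighbors v_1,...,v_{d_v}. If μ(v) ≤ μ(v_i) for some i, then sup_{w ∈ V_G} μ(B(w,1))/μ(w) ≥ 3. -/
import Mathlib


/-- if a vertex `v` of degree at least 3 has a neighbor with weight at
least `μ(v)`, then `sup_w μ(B(w,1))/μ(w) ≥ 3`. -/
theorem stmt_7 {V : Type*} [Fintype V] [DecidableEq V] (G : SimpleGraph V)
    [DecidableRel G.Adj] (hG : G.Connected)
    (μ : V → ℝ) (hμ : ∀ v, 0 < μ v)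
    (v : V) (hdeg : 3 ≤ G.degree v)
    (hex : ∃ u ∈ G.neighborFinset v, μ v ≤ μ u) :
    3 ≤ ⨆ w : V, (μ w + ∑ u ∈ G.neighborFinset w, μ u) / μ w := by
  by_contra h
  push_neg at h
  have key : ∀ w, ∑ x ∈ G.neighborFinset w, μ x < 2 * μ w := by
    intro w
    have h1 : (μ w + ∑ u ∈ G.neighborFinset w, μ u) / μ w < 3 :=
      lt_of_le_of_lt (le_ciSup (f := fun w : V => (μ w + ∑ u ∈ G.neighborFinset w, μ u) / μ w) (Set.Finite.bddAbove (Set.finite_range _)) w) h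
    have h2 := (div_lt_iff₀ (hμ w)).mp h1
    linarith
  obtain ⟨u, hu, huv⟩ := hex
  have hcard : 3 ≤ (G.neighborFinset v).card := by
    rwa [SimpleGraph.card_neighborFinset_eq_degree]
  obtain ⟨a, ha⟩ : ((G.neighborFinset v).erase u).Nonempty := by
    rw [← Finset.card_pos, Finset.card_erase_of_mem hu]; omega
  obtain ⟨b, hb⟩ : (((G.neighborFinset v).erase u).erase a).Nonempty := by
    rw [← Finset.card_pos, Finset.card_erase_of_mem ha,
      Finset.card_erase_of_mem hu]; omega
  have hba : b ≠ a := (Finset.mem_erase.mp hb).1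
  have hbu : b ≠ u := (Finset.mem_erase.mp (Finset.mem_erase.mp hb).2).1
  have hau : a ≠ u := (Finset.mem_erase.mp ha).1
  have haN : a ∈ G.neighborFinset v := (Finset.mem_erase.mp ha).2
  have hbN : b ∈ G.neighborFinset v := (Finset.mem_erase.mp (Finset.mem_erase.mp hb).2).2
  have hsub : ({u, a, b} : Finset V) ⊆ G.neighborFinset v := by
    intro x hx
    simp only [Finset.mem_insert, Finset.mem_singleton] at hx
    rcases hx with rfl | rfl | rfl <;> assumption
  have hsum : μ u + μ a + μ b ≤ ∑ x ∈ G.neighborFinset v, μ x := by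
    have := Finset.sum_le_sum_of_subset_of_nonneg hsub
      (fun x _ _ => (hμ x).le)
    rwa [Finset.sum_insert (by simp [hau.symm, hbu.symm]),
      Finset.sum_insert (by simp [hba.symm]), Finset.sum_singleton, ← add_assoc] at this
  have hva : v ∈ G.neighborFinset a := by
    rw [SimpleGraph.mem_neighborFinset] at haN ⊢
    exact haN.symm
  have hvb : v ∈ G.neighborFinset b := by
    rw [SimpleGraph.mem_neighborFinset] at hbN ⊢
    exact hbN.symm
  have h3 : μ v ≤ ∑ x ∈ G.neighborFinset a, μ x :=
    Finset.single_le_sum (fun x _ => (hμ x).le) hva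
  have h4 : μ v ≤ ∑ x ∈ G.neighborFinset b, μ x :=
    Finset.single_le_sum (fun x _ => (hμ x).le) hvb
  have := key v
  have := key a
  have := key b
  linarith
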